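/- For a near-hook partition (a, b, 1^c) with a ≥ b ≥ 1 and c ≥ 0, the product over all boxes s of its Young diagram except the box (1,1) of (2·a'(s) − l'(s)) equals (−1)^{c+1} (c+1)! (2a−2)!! (2b−3)!!, where a'(s) is the number of boxes strictly to the left of s in its row and l'(s) is the number of boxes strictly above s in its column. For b = 0 (a one-row partition (a)) the product equals (2a−2)!!. -/
import Mathlib

/-- The cells (0-indexed `(row, column)` pairs) of the Young diagram of the
near-hook partition `(a, b, 1^c)`. -/
def nearHookCells (a b c : ℕ) : Finset (ℕ × ℕ) :=
  ({0} ×ˢ Finset.range a) ∪ ({1} ×ˢ Finset.range b) ∪ (Finset.Icc 2 (c + 1) ×ˢ {0})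

lemma L0 : ∀ a : ℕ, 1 ≤ a → ∏ j ∈ Finset.Ioo 0 a, (2 * (j:ℤ)) = Nat.doubleFactorial (2*a-2)
  | 1, _ => by
    rw [show Finset.Ioo 0 1 = (∅ : Finset ℕ) from rfl]
    simp [Nat.doubleFactorial]
  | (a+2), _ => by
    have h : Finset.Ioo 0 (a+2) = Finset.Icc 1 (a+1) := by ext x; simp; omega
    have h2 : Finset.Ioo 0 (a+1) = Finset.Icc 1 a := by ext x; simp; omega
    have h3 : 2*(a+2)-2 = 2*a+2 := by omega
    have h4 : 2*(a+1)-2 = 2*a := by omega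
    rw [h, Finset.prod_Icc_succ_top (by omega), ← h2, L0 (a+1) (by omega), h3, h4,
      Nat.doubleFactorial]
    push_cast
    ring

lemma L1 : ∀ b : ℕ, 1 ≤ b → ∏ j ∈ Finset.range b, (2 * (j:ℤ) - 1) = -(Nat.doubleFactorial (2*b-3))
  | 1, _ => by norm_num [Nat.doubleFactorial]
  | (b+1), hb1 => by
    rcases Nat.eq_or_lt_of_le hb1 with h | h
    · have hb0 : b = 0 := by omega
      subst hb0
      norm_num [Nat.doubleFactorial]
    have hb : 1 ≤ b := by omega
    rw [Finset.prod_range_succ, L1 b hb]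
    have hd : Nat.doubleFactorial (2*(b+1)-3) = (2*b-1) * Nat.doubleFactorial (2*b-3) := by
      match b, hb with
      | 1, _ => decide
      | (k+2), _ =>
        have h5 : 2*(k+3)-3 = (2*(k+2)-3) + 2 := by omega
        have h6 : (2*(k+2)-3)+2 = 2*(k+2)-1 := by omega
        rw [h5, Nat.doubleFactorial, h6]
    rw [hd]
    have : (2 * (b:ℤ) - 1) = ((2*b-1 : ℕ) : ℤ) := by
      push_cast [Nat.cast_sub (by omega : 1 ≤ 2*b)]; ring
    rw [this]
    push_cast
    ring

lemma L2 : ∀ c : ℕ, ∏ i ∈ Finset.Icc 2 (c+1), (-(i:ℤ)) = (-1)^c * Nat.factorial (c+1)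
  | 0 => by simp [Nat.factorial]
  | (c+1) => by
    rw [Finset.prod_Icc_succ_top (by omega), L2 c]
    have hf : (Nat.factorial (c+1+1) : ℤ) = (c+2) * Nat.factorial (c+1) := by
      rw [Nat.factorial_succ]; push_cast; ring
    rw [hf]
    push_cast
    ring

/-- for the near hook `(a, b, 1^c)` with `a ≥ b`, the product of
`2a'(s) - l'(s)` over all boxes `s ≠ (1,1)` equals `(-1)^{c+1} (c+1)! (2a-2)!! (2b-3)!!`
when `b ≥ 1`, and equals `(2a-2)!!` when `b = 0` (one-row shape `(a)`, i.e. `c = 0`).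
Here for a box in row `i`, column `j` (1-indexed), `a'(s) = j - 1` and `l'(s) = i - 1`. -/
theorem stmt13 (a b c : ℕ) (ha : 1 ≤ a) (hab : b ≤ a) :
    (1 ≤ b →
      ∏ s ∈ (nearHookCells a b c).erase (0, 0), (2 * (s.2 : ℤ) - (s.1 : ℤ))
        = (-1) ^ (c + 1) * Nat.factorial (c + 1) *
            Nat.doubleFactorial (2 * a - 2) * Nat.doubleFactorial (2 * b - 3)) ∧
    (b = 0 → c = 0 →
      ∏ s ∈ (nearHookCells a b c).erase (0, 0), (2 * (s.2 : ℤ) - (s.1 : ℤ))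
        = Nat.doubleFactorial (2 * a - 2)) := by
  have hset : (nearHookCells a b c).erase (0,0)
      = (({0} : Finset ℕ) ×ˢ Finset.Ioo 0 a) ∪ (({1} : Finset ℕ) ×ˢ Finset.range b)
        ∪ (Finset.Icc 2 (c+1) ×ˢ ({0} : Finset ℕ)) := by
    ext ⟨i, j⟩
    simp only [nearHookCells, Finset.mem_erase, Finset.mem_union, Finset.mem_product,
      Finset.mem_singleton, Finset.mem_range, Finset.mem_Ioo, Finset.mem_Icc, ne_eq,
      Prod.mk.injEq, not_and]
    omega
  have hd1 : Disjoint ((({0} : Finset ℕ) ×ˢ Finset.Ioo 0 a)) (({1} : Finset ℕ) ×ˢ Finset.range b) := by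
    rw [Finset.disjoint_left]
    rintro ⟨i, j⟩ hm hm2
    simp at hm hm2
    omega
  have hd2 : Disjoint ((({0} : Finset ℕ) ×ˢ Finset.Ioo 0 a) ∪ (({1} : Finset ℕ) ×ˢ Finset.range b))
      (Finset.Icc 2 (c+1) ×ˢ ({0} : Finset ℕ)) := by
    rw [Finset.disjoint_left]
    rintro ⟨i, j⟩ hm hm2
    simp at hm hm2
    omega
  rw [hset, Finset.prod_union hd2, Finset.prod_union hd1]
  have e0 : ∏ s ∈ (({0} : Finset ℕ) ×ˢ Finset.Ioo 0 a), (2 * (s.2 : ℤ) - (s.1 : ℤ))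
      = ∏ j ∈ Finset.Ioo 0 a, (2 * (j:ℤ)) := by
    rw [Finset.prod_product]; simp
  have e1 : ∏ s ∈ (({1} : Finset ℕ) ×ˢ Finset.range b), (2 * (s.2 : ℤ) - (s.1 : ℤ))
      = ∏ j ∈ Finset.range b, (2 * (j:ℤ) - 1) := by
    rw [Finset.prod_product]; simp
  have e2 : ∏ s ∈ (Finset.Icc 2 (c+1) ×ˢ ({0} : Finset ℕ)), (2 * (s.2 : ℤ) - (s.1 : ℤ))
      = ∏ i ∈ Finset.Icc 2 (c+1), (-(i:ℤ)) := by
    rw [Finset.prod_product]; simp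
  rw [e0, e1, e2, L0 a ha, L2 c]
  constructor
  · intro hb
    rw [L1 b hb]
    ring
  · intro hb hc
    subst hb hc
    simp
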